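/- arXiv:1703.01388 — 3 statements merged into one kernel-verified Lean document; each statement's English description precedes it below -/
import Mathlib

section
/- Let H be a real inner product space and let (a_n)_{n≥0} be a sequence in H such that ⟨3a_{n+1} − 4a_n + a_{n−1}, a_{n+1}⟩ ≤ 0 for all n ≥ 1. Then the modified energy G_n := ‖a_n‖² + ‖2a_n − a_{n−1}‖² is nonincreasing in n; more precisely, G_{n+1} ≤ G_n − ‖a_{n+1} − 2a_n + a_{n−1}‖² for all n ≥ 1. -/
open RealInnerProductSpace

lemma bdf2_identity {H : Type*} [NormedAddCommGroup H] [InnerProductSpace ℝ H]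
    (u v w : H) :
    ‖u‖ ^ 2 + ‖(2:ℝ) • u - v‖ ^ 2 + ‖u - (2:ℝ) • v + w‖ ^ 2 =
      ‖v‖ ^ 2 + ‖(2:ℝ) • v - w‖ ^ 2 + 2 * ⟪(3:ℝ) • u - (4:ℝ) • v + w, u⟫ := by
  simp only [← real_inner_self_eq_norm_sq, inner_sub_left, inner_sub_right,
    inner_add_left, inner_add_right, real_inner_smul_left, real_inner_smul_right]
  rw [real_inner_comm v u, real_inner_comm w u, real_inner_comm w v]
  ring

theorem bdf2_G_stability
    {H : Type*} [NormedAddCommGroup H] [InnerProductSpace ℝ H]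
    (a : ℕ → H)
    (h : ∀ n ≥ 1, ⟪(3:ℝ) • a (n + 1) - (4:ℝ) • a n + a (n - 1), a (n + 1)⟫ ≤ 0) :
    ∀ n ≥ 1,
      ‖a (n + 1)‖ ^ 2 + ‖(2:ℝ) • a (n + 1) - a n‖ ^ 2 ≤
        (‖a n‖ ^ 2 + ‖(2:ℝ) • a n - a (n - 1)‖ ^ 2)
          - ‖a (n + 1) - (2:ℝ) • a n + a (n - 1)‖ ^ 2 := by
  intro n hn
  have := bdf2_identity (a (n + 1)) (a n) (a (n - 1))
  have h' := h n hn
  linarith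
end

section
/- Let H be a real inner product space, δt > 0, and let u, ũ, q, q′ ∈ H satisfy the pressure-correction relation u − ũ + (δt/2)(q′ − q) = 0 together with the orthogonality conditions ⟨u, q⟩ = 0 and ⟨u, q′⟩ = 0. Then (1/(2δt))(‖u‖² − ‖ũ‖²) + (δt/8)(‖q′‖² − ‖q‖²) = (1/2)⟨ũ, q⟩. -/
open RealInnerProductSpace

theorem cn2_pressure_correction_energy_identity
    {H : Type*} [NormedAddCommGroup H] [InnerProductSpace ℝ H]
    (δt : ℝ) (hδt : 0 < δt) (u utilde q q' : H)
    (hrel : u - utilde + (δt / 2) • (q' - q) = 0)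
    (hq : ⟪u, q⟫ = 0) (hq' : ⟪u, q'⟫ = 0) :
    (1 / (2 * δt)) * (‖u‖ ^ 2 - ‖utilde‖ ^ 2) + (δt / 8) * (‖q'‖ ^ 2 - ‖q‖ ^ 2)
      = (1 / 2) * ⟪utilde, q⟫ := by
  have h : utilde = u + (δt / 2) • (q' - q) := by
    have h2 : utilde - (u + (δt / 2) • (q' - q))
        = -(u - utilde + (δt / 2) • (q' - q)) := by abel
    rw [← sub_eq_zero, h2, hrel, neg_zero]
  subst h
  have e1 : ‖u + (δt / 2) • (q' - q)‖ ^ 2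
      = ‖u‖ ^ 2 + 2 * ⟪u, (δt / 2) • (q' - q)⟫ + ‖(δt / 2) • (q' - q)‖ ^ 2 :=
    norm_add_sq_real u _
  have e2 : ‖q' - q‖ ^ 2 = ‖q'‖ ^ 2 - 2 * ⟪q', q⟫ + ‖q‖ ^ 2 := norm_sub_sq_real q' q
  have e3 : ‖(δt / 2) • (q' - q)‖ ^ 2 = (δt / 2) ^ 2 * ‖q' - q‖ ^ 2 := by
    rw [norm_smul, mul_pow, Real.norm_eq_abs, sq_abs]
  rw [e1, e3, e2]
  rw [inner_smul_right, inner_sub_right, hq, hq']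
  rw [inner_add_left, inner_smul_left, inner_sub_left, hq, real_inner_self_eq_norm_sq]
  simp only [RCLike.star_def, starRingEnd_apply, star_trivial]
  field_simp
  ring
end

section
/- Let H be a real inner product space, δt > 0, and let u, ũ, q, q′ ∈ H satisfy the pressure-correction relation (3/(2δt))(u − ũ) + (q′ − q) = 0 together with the orthogonality conditions ⟨u, q⟩ = 0 and ⟨u, q′⟩ = 0. Then ‖ũ‖² = ‖u‖² + ‖u − ũ‖², and (3/(4δt))(‖u‖² − ‖ũ‖²) + (δt/3)(‖q′‖² − ‖q‖²) = ⟨ũ, q⟩. -/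
open RealInnerProductSpace

theorem bdf2_pressure_correction_energy_identity
    {H : Type*} [NormedAddCommGroup H] [InnerProductSpace ℝ H]
    (δt : ℝ) (hδt : 0 < δt) (u utilde q q' : H)
    (hrel : (3 / (2 * δt)) • (u - utilde) + (q' - q) = 0)
    (hq : ⟪u, q⟫ = 0) (hq' : ⟪u, q'⟫ = 0) :
    ‖utilde‖ ^ 2 = ‖u‖ ^ 2 + ‖u - utilde‖ ^ 2 ∧
      (3 / (4 * δt)) * (‖u‖ ^ 2 - ‖utilde‖ ^ 2) + (δt / 3) * (‖q'‖ ^ 2 - ‖q‖ ^ 2)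
        = ⟪utilde, q⟫ := by
  have hδt' : δt ≠ 0 := ne_of_gt hδt
  have hd : u - utilde = (2 * δt / 3) • (q - q') := by
    have h1 : (3 / (2 * δt)) • (u - utilde) = q - q' := by
      have := hrel
      rw [add_eq_zero_iff_eq_neg] at this
      rw [this]; abel
    have h2 : (2 * δt / 3) • ((3 / (2 * δt)) • (u - utilde)) = (2 * δt / 3) • (q - q') := by
      rw [h1]
    rwa [smul_smul, show (2 * δt / 3) * (3 / (2 * δt)) = 1 by field_simp, one_smul] at h2
  have hiq : ⟪u - utilde, q⟫ = (2 * δt / 3) * (⟪q, q⟫ - ⟪q', q⟫) := by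
    rw [hd, inner_smul_left, inner_sub_left]; norm_num
  have hiu : ⟪u, u - utilde⟫ = 0 := by
    rw [hd, inner_smul_right, inner_sub_right, hq, hq']; ring
  have hnd : ‖u - utilde‖ ^ 2 = (2 * δt / 3) ^ 2 * ‖q - q'‖ ^ 2 := by
    rw [hd, norm_smul]
    rw [Real.norm_eq_abs, abs_of_pos (by positivity : (0:ℝ) < 2 * δt / 3)]
    ring
  have huu : ⟪u, utilde⟫ = ‖u‖ ^ 2 := by
    have := hiu
    rw [inner_sub_right, real_inner_self_eq_norm_sq] at this
    linarith
  have h1 : ‖utilde‖ ^ 2 = ‖u‖ ^ 2 + ‖u - utilde‖ ^ 2 := by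
    have := norm_sub_sq_real u utilde
    rw [huu] at this
    linarith
  refine ⟨h1, ?_⟩
  have hqq' : ‖q - q'‖ ^ 2 = ‖q‖ ^ 2 - 2 * ⟪q, q'⟫ + ‖q'‖ ^ 2 := norm_sub_sq_real q q'
  have hutq : ⟪utilde, q⟫ = ⟪u, q⟫ - ⟪u - utilde, q⟫ := by
    have := inner_sub_left (𝕜 := ℝ) u utilde q
    linarith
  have hsym : ⟪q', q⟫ = ⟪q, q'⟫ := (real_inner_comm q' q).symm
  have hqn : ⟪q, q⟫ = ‖q‖ ^ 2 := real_inner_self_eq_norm_sq q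
  rw [hutq, hq, hiq, hsym, hqn, h1, hnd, hqq']
  field_simp
  ring
end
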